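/- arXiv:1605.08973 — 7 statements merged into one kernel-verified Lean document; each statement's English description precedes it below -/
import Mathlib

section
/- Let 3 < α ≤ 4 and define G(t,s) = [(t−s)^(α−1) + (1−s)^(α−2) t^(α−2)((s−t)+(α−2)(1−t)s)]/Γ(α) for 0 ≤ s ≤ t ≤ 1, and G(t,s) = (1−s)^(α−2) t^(α−2)((s−t)+(α−2)(1−t)s)/Γ(α) for 0 ≤ t ≤ s ≤ 1. Then G(t,s) ≥ 0 for all t, s ∈ [0,1]. -/
open Real

noncomputable def greenG (α t s : ℝ) : ℝ :=
  if s ≤ t then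
    ((t - s) ^ (α - 1) + (1 - s) ^ (α - 2) * t ^ (α - 2) * ((s - t) + (α - 2) * (1 - t) * s)) / Real.Gamma α
  else
    (1 - s) ^ (α - 2) * t ^ (α - 2) * ((s - t) + (α - 2) * (1 - t) * s) / Real.Gamma α

/-!
Write `p = α - 2 ≥ 1`. For `t < s` every factor of the numerator is nonnegative. For `s ≤ t`, put
`a = t (1 - s)` and `d = t - s`, so that `0 ≤ d ≤ a` and `(1 - t) s = a - d`; the numerator becomes
`p a^p (a - d) - d (a^p - d^p)`, which is nonnegative by Bernoulli's inequality
`a^p - d^p ≤ p a^p (1 - d / a)` together with `d ≤ a`.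
-/

lemma mul_rpow_sub_rpow_le {a d p : ℝ} (hd : 0 ≤ d) (hda : d ≤ a) (hp : 1 ≤ p) :
    d * (a ^ p - d ^ p) ≤ p * a ^ p * (a - d) := by
  rcases hd.eq_or_lt with rfl | hd
  · have ha : 0 ≤ a := hda
    rw [zero_mul, sub_zero]
    exact mul_nonneg (mul_nonneg (by linarith) (rpow_nonneg ha p)) ha
  have ha : 0 < a := hd.trans_le hda
  have hap : 0 < a ^ p := rpow_pos_of_pos ha p
  have bernoulli : a ^ p - d ^ p ≤ p * a ^ p * (1 - d / a) := by
    have h := one_add_mul_self_le_rpow_one_add (s := d / a - 1)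
      (by linarith [div_nonneg hd.le ha.le]) hp
    rw [add_sub_cancel, div_rpow hd.le ha.le, le_div_iff₀ hap] at h
    linarith
  have hratio : 0 ≤ 1 - d / a := by rw [sub_nonneg, div_le_one ha]; exact hda
  calc d * (a ^ p - d ^ p) ≤ d * (p * a ^ p * (1 - d / a)) := by gcongr
    _ ≤ a * (p * a ^ p * (1 - d / a)) := by gcongr
    _ = p * a ^ p * (a - d) := by field_simp

lemma greenG_numerator_nonneg_of_le {p t s : ℝ} (hp : 1 ≤ p) (hs0 : 0 ≤ s) (hst : s ≤ t)
    (ht1 : t ≤ 1) :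
    0 ≤ (t - s) ^ (p + 1) + (1 - s) ^ p * t ^ p * ((s - t) + p * (1 - t) * s) := by
  have hd : 0 ≤ t - s := by linarith
  have hda : t - s ≤ t * (1 - s) := by nlinarith
  rw [rpow_add_one' hd (by linarith), ← mul_rpow (by linarith) (by linarith),
    mul_comm (1 - s) t]
  linear_combination mul_rpow_sub_rpow_le hd hda hp

lemma greenG_numerator_nonneg_of_lt {p t s : ℝ} (hp : 0 ≤ p) (ht0 : 0 ≤ t) (hts : t < s)
    (hs1 : s ≤ 1) :
    0 ≤ (1 - s) ^ p * t ^ p * ((s - t) + p * (1 - t) * s) := by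
  have : 0 ≤ p * (1 - t) * s := mul_nonneg (mul_nonneg hp (by linarith)) (by linarith)
  have : 0 ≤ (s - t) + p * (1 - t) * s := by linarith
  have : 0 ≤ 1 - s := by linarith
  positivity

theorem stmt4_general (α : ℝ) (hα : 3 < α)
    (t s : ℝ) (ht : t ∈ Set.Icc (0:ℝ) 1) (hs : s ∈ Set.Icc (0:ℝ) 1) :
    0 ≤ greenG α t s := by
  obtain ⟨ht0, ht1⟩ := ht
  obtain ⟨hs0, hs1⟩ := hs
  have hΓ : 0 < Gamma α := Gamma_pos_of_pos (by linarith)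
  unfold greenG
  split_ifs with hst
  · have h := greenG_numerator_nonneg_of_le (p := α - 2) (by linarith) hs0 hst ht1
    rw [show α - 2 + 1 = α - 1 by ring] at h
    exact div_nonneg h hΓ.le
  · exact div_nonneg (greenG_numerator_nonneg_of_lt (by linarith) ht0 (not_le.mp hst) hs1) hΓ.le

theorem stmt4 (α : ℝ) (hα : 3 < α) (hα4 : α ≤ 4)
    (t s : ℝ) (ht : t ∈ Set.Icc (0:ℝ) 1) (hs : s ∈ Set.Icc (0:ℝ) 1) :
    0 ≤ greenG α t s :=
  stmt4_general α hα t s ht hs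
end

section
/- Let 3 < α ≤ 4, t ∈ [0,1], s ∈ (0,1). Then for the Green's function G defined as above, one has the bound G(t,s) ≤ [(t−s)₊^(α−1) + (α−1)(1−s)^(α−2) t^(α−2) s]/Γ(α), where (t−s)₊ = max(t−s, 0). In particular G(t,s) ≤ α/Γ(α) for all t, s ∈ [0,1]. -/
open Real

/-! Writing both branches of `greenG` with the single term `(t - s)₊ ^ (α - 1)`, the bound reduces
to `(s - t) + (α - 2)(1 - t)s ≤ (α - 1)s`, i.e. `0 ≤ t (1 + (α - 2)s)`; every factor of the
resulting majorant is at most `1`, except `α - 1`, which gives the uniform bound `α / Γ(α)`. -/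

theorem greenG_eq_max_rpow {α : ℝ} (hα : 1 < α) (t s : ℝ) :
    greenG α t s = ((max (t - s) 0) ^ (α - 1)
      + (1 - s) ^ (α - 2) * t ^ (α - 2) * ((s - t) + (α - 2) * (1 - t) * s)) / Real.Gamma α := by
  unfold greenG
  split_ifs with hst
  · rw [max_eq_left (sub_nonneg.mpr hst)]
  · rw [max_eq_right (by linarith), Real.zero_rpow (by linarith), zero_add]

theorem green_factor_le {α t s : ℝ} (hα : 1 ≤ α) (ht : 0 ≤ t) (hs₀ : 0 ≤ s) (hs₁ : s ≤ 1) :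
    (s - t) + (α - 2) * (1 - t) * s ≤ (α - 1) * s := by
  have : 0 ≤ t * (1 + (α - 2) * s) := mul_nonneg ht (by nlinarith)
  linarith

theorem greenG_le_majorant {α t s : ℝ} (hα : 1 < α) (ht : 0 ≤ t) (hs : s ∈ Set.Icc (0 : ℝ) 1) :
    greenG α t s ≤
      ((max (t - s) 0) ^ (α - 1) + (α - 1) * (1 - s) ^ (α - 2) * t ^ (α - 2) * s) / Real.Gamma α := by
  have hweight : 0 ≤ (1 - s) ^ (α - 2) * t ^ (α - 2) :=
    mul_nonneg (Real.rpow_nonneg (by linarith [hs.2]) _) (Real.rpow_nonneg ht _)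
  rw [greenG_eq_max_rpow hα, div_le_div_iff_of_pos_right (Real.Gamma_pos_of_pos (by linarith))]
  have := mul_le_mul_of_nonneg_left (green_factor_le hα.le ht hs.1 hs.2) hweight
  linarith

theorem greenG_majorant_le {α t s : ℝ} (hα : 2 ≤ α) (ht : t ∈ Set.Icc (0 : ℝ) 1)
    (hs : s ∈ Set.Icc (0 : ℝ) 1) :
    (max (t - s) 0) ^ (α - 1) + (α - 1) * (1 - s) ^ (α - 2) * t ^ (α - 2) * s ≤ α := by
  obtain ⟨ht₀, ht₁⟩ := ht
  obtain ⟨hs₀, hs₁⟩ := hs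
  have hmax : (max (t - s) 0) ^ (α - 1) ≤ 1 :=
    Real.rpow_le_one (le_max_right _ _) (max_le (by linarith) zero_le_one) (by linarith)
  have hweight : (1 - s) ^ (α - 2) * t ^ (α - 2) * s ≤ 1 :=
    mul_le_one₀ (mul_le_one₀ (Real.rpow_le_one (by linarith) (by linarith) (by linarith))
      (Real.rpow_nonneg ht₀ _) (Real.rpow_le_one ht₀ ht₁ (by linarith))) hs₀ hs₁
  have := mul_le_mul_of_nonneg_left hweight (by linarith : (0 : ℝ) ≤ α - 1)
  linarith [show (α - 1) * ((1 - s) ^ (α - 2) * t ^ (α - 2) * s)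
    = (α - 1) * (1 - s) ^ (α - 2) * t ^ (α - 2) * s by ring]

theorem stmt6_general (α : ℝ) (hα : 3 < α) :
    (∀ t ∈ Set.Icc (0:ℝ) 1, ∀ s ∈ Set.Ioo (0:ℝ) 1,
      greenG α t s ≤
        ((max (t - s) 0) ^ (α - 1) + (α - 1) * (1 - s) ^ (α - 2) * t ^ (α - 2) * s) / Real.Gamma α) ∧
    (∀ t ∈ Set.Icc (0:ℝ) 1, ∀ s ∈ Set.Icc (0:ℝ) 1, greenG α t s ≤ α / Real.Gamma α) := by
  refine ⟨fun t ht s hs => greenG_le_majorant (by linarith) ht.1 (Set.Ioo_subset_Icc_self hs),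
    fun t ht s hs => (greenG_le_majorant (by linarith) ht.1 hs).trans ?_⟩
  exact div_le_div_of_nonneg_right (greenG_majorant_le (by linarith) ht hs)
    (Real.Gamma_pos_of_pos (by linarith)).le

theorem stmt6 (α : ℝ) (hα : 3 < α) (hα4 : α ≤ 4) :
    (∀ t ∈ Set.Icc (0:ℝ) 1, ∀ s ∈ Set.Ioo (0:ℝ) 1,
      greenG α t s ≤
        ((max (t - s) 0) ^ (α - 1) + (α - 1) * (1 - s) ^ (α - 2) * t ^ (α - 2) * s) / Real.Gamma α) ∧
    (∀ t ∈ Set.Icc (0:ℝ) 1, ∀ s ∈ Set.Icc (0:ℝ) 1, greenG α t s ≤ α / Real.Gamma α) :=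
  stmt6_general α hα
end

section
/- Let 0 < σ < 1 and 3 < α ≤ 4. Define H(t) = ∫₀¹ G(t,s) F(s) ds where F : (0,1] → ℝ is continuous, and s ↦ s^σ F(s) extends to a continuous function on [0,1] bounded by M. Then |H(t) − H(0)| = |H(t)| ≤ (M(α−1) t^(α−2)/Γ(α)) B(1−σ, α−1) + (M t^(α−σ)/Γ(α)) B(1−σ, α) for all t ∈ [0,1]. In particular H is continuous at 0 with H(0) = 0. -/
open Real

noncomputable def eulerBeta (x y : ℝ) : ℝ := ∫ u in (0:ℝ)..1, u ^ (x - 1) * (1 - u) ^ (y - 1)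

/-!
Since `s - t + (α - 2)(1 - t)s` lies in `[-1, α - 2]`, the Green function is dominated by
`((t - s)₊^(α-1) + (α - 1) t^(α-2) (1 - s)^(α-2)) / Γ(α)`, and `|F s| ≤ M s^(-σ)`.
Integrating the product of these majorants gives the two Beta integrals, the first after the
substitution `s = t u`. Since `G(0, s) = 0` for `s ≥ 0`, `H(0) = 0`, and the bound, which
vanishes at `t = 0`, gives continuity at `0`.
-/

open Set MeasureTheory

lemma integral_rpow_mul_sub_rpow {t : ℝ} (ht : 0 < t) (x y : ℝ) :
    ∫ s in (0:ℝ)..t, s ^ (x - 1) * (t - s) ^ (y - 1) = t ^ (x + y - 1) * eulerBeta x y := by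
  have hsubst := intervalIntegral.smul_integral_comp_mul_left (a := 0) (b := 1)
    (fun s => s ^ (x - 1) * (t - s) ^ (y - 1)) t
  simp only [mul_zero, mul_one, smul_eq_mul] at hsubst
  rw [← hsubst, eulerBeta, ← intervalIntegral.integral_const_mul,
    ← intervalIntegral.integral_const_mul]
  refine intervalIntegral.integral_congr fun u hu => ?_
  rw [uIcc_of_le zero_le_one] at hu
  rw [show t - t * u = t * (1 - u) by ring, mul_rpow ht.le hu.1,
    mul_rpow ht.le (sub_nonneg.2 hu.2), show x + y - 1 = 1 + (x - 1) + (y - 1) by ring,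
    rpow_add ht, rpow_add ht, rpow_one]
  ring

lemma integral_rpow_mul_max_sub_rpow {t b x y : ℝ} (ht : 0 < t) (htb : t ≤ b) (hy : 1 < y) :
    ∫ s in (0:ℝ)..b, s ^ (x - 1) * max (t - s) 0 ^ (y - 1) = t ^ (x + y - 1) * eulerBeta x y := by
  rw [← integral_rpow_mul_sub_rpow ht, intervalIntegral.integral_of_le (ht.le.trans htb),
    intervalIntegral.integral_of_le ht.le,
    setIntegral_eq_of_subset_of_forall_sdiff_eq_zero measurableSet_Ioc (Ioc_subset_Ioc_right htb)]
  · refine setIntegral_congr_fun measurableSet_Ioc fun s hs => ?_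
    rw [max_eq_left (sub_nonneg.2 hs.2)]
  · rintro s ⟨hs, hst⟩
    have hts : t - s ≤ 0 := by
      by_contra! h
      exact hst ⟨hs.1, by linarith⟩
    rw [max_eq_right hts, zero_rpow (by linarith), mul_zero]

lemma greenG_zero_left {α s : ℝ} (hα : 2 < α) (hs : 0 ≤ s) : greenG α 0 s = 0 := by
  have hzero : (0:ℝ) ^ (α - 2) = 0 := zero_rpow (by linarith)
  unfold greenG
  split_ifs with hs0
  · rw [le_antisymm hs0 hs, sub_self, zero_rpow (by linarith), hzero]
    simp
  · simp [hzero]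

lemma integral_greenG_zero_mul {α : ℝ} (hα : 2 < α) (F : ℝ → ℝ) :
    ∫ s in (0:ℝ)..1, greenG α 0 s * F s = 0 := by
  refine (intervalIntegral.integral_congr (g := fun _ => 0) fun s hs => ?_).trans
    intervalIntegral.integral_zero
  rw [uIcc_of_le zero_le_one] at hs
  simp only [greenG_zero_left hα hs.1, zero_mul]

/-- `max (t - s) 0` stands for `(t - s)₊`, avoiding `rpow` at a negative base. -/
lemma abs_greenG_le {α t s : ℝ} (hα : 2 ≤ α) (ht : t ∈ Icc (0:ℝ) 1) (hs : s ∈ Icc (0:ℝ) 1) :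
    |greenG α t s| ≤
      (max (t - s) 0 ^ (α - 1) + (α - 1) * t ^ (α - 2) * (1 - s) ^ (α - 2)) / Gamma α := by
  have hΓ : 0 < Gamma α := Gamma_pos_of_pos (by linarith)
  have hts : 0 ≤ t ^ (α - 2) * (1 - s) ^ (α - 2) :=
    mul_nonneg (rpow_nonneg ht.1 _) (rpow_nonneg (sub_nonneg.2 hs.2) _)
  have hbracket : |s - t + (α - 2) * (1 - t) * s| ≤ α - 1 := by
    have hprod : 0 ≤ (1 - t) * s := mul_nonneg (sub_nonneg.2 ht.2) hs.1
    have hprod_le : (1 - t) * s ≤ 1 := mul_le_one₀ (by linarith [ht.1]) hs.1 hs.2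
    rw [abs_le]
    constructor <;> nlinarith [hs.1, hs.2, ht.1, ht.2]
  have hsecond : |(1 - s) ^ (α - 2) * t ^ (α - 2) * (s - t + (α - 2) * (1 - t) * s)| ≤
      (α - 1) * t ^ (α - 2) * (1 - s) ^ (α - 2) := by
    rw [abs_mul, abs_of_nonneg (by rw [mul_comm]; exact hts)]
    nlinarith
  unfold greenG
  split_ifs with hst
  · rw [abs_div, abs_of_pos hΓ, max_eq_left (sub_nonneg.2 hst)]
    gcongr ?_ / _
    calc _ ≤ |(t - s) ^ (α - 1)| + _ := abs_add_le _ _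
      _ ≤ _ := by
        rw [abs_of_nonneg (rpow_nonneg (sub_nonneg.2 hst) _)]
        exact add_le_add_right hsecond _
  · rw [abs_div, abs_of_pos hΓ]
    gcongr ?_ / _
    exact hsecond.trans (le_add_of_nonneg_left (rpow_nonneg (le_max_right _ _) _))

lemma abs_le_mul_rpow_neg {σ M s c : ℝ} (hs : 0 < s) (h : |s ^ σ * c| ≤ M) :
    |c| ≤ M * s ^ (-σ) := by
  have hc : |c| = s ^ (-σ) * |s ^ σ * c| := by
    rw [abs_mul, abs_of_pos (rpow_pos_of_pos hs σ), ← mul_assoc, ← rpow_add hs, neg_add_cancel,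
      rpow_zero, one_mul]
  rw [hc, mul_comm M]
  exact mul_le_mul_of_nonneg_left h (rpow_nonneg hs.le _)

theorem abs_integral_greenG_mul_le {σ α M t : ℝ} (hσ : σ < 1) (hα : 2 < α) {F : ℝ → ℝ}
    (hM : ∀ s ∈ Icc (0:ℝ) 1, |s ^ σ * F s| ≤ M) (ht : t ∈ Icc (0:ℝ) 1) :
    |∫ s in (0:ℝ)..1, greenG α t s * F s| ≤
      M * (α - 1) * t ^ (α - 2) / Gamma α * eulerBeta (1 - σ) (α - 1)
        + M * t ^ (α - σ) / Gamma α * eulerBeta (1 - σ) α := by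
  rcases ht.1.eq_or_lt with rfl | ht0
  · rw [integral_greenG_zero_mul hα, abs_zero, zero_rpow (by linarith), zero_rpow (by linarith)]
    simp
  have hΓ : 0 < Gamma α := Gamma_pos_of_pos (by linarith)
  set g : ℝ → ℝ := fun s => M / Gamma α * (s ^ (1 - σ - 1) * max (t - s) 0 ^ (α - 1)
    + (α - 1) * t ^ (α - 2) * (s ^ (1 - σ - 1) * (1 - s) ^ (α - 1 - 1))) with hg
  have hweight : IntervalIntegrable (fun s : ℝ => s ^ (1 - σ - 1)) volume 0 1 :=
    intervalIntegral.intervalIntegrable_rpow' (by linarith)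
  have hfirst : IntervalIntegrable (fun s : ℝ => s ^ (1 - σ - 1) * max (t - s) 0 ^ (α - 1))
      volume 0 1 :=
    hweight.mul_continuousOn ((continuous_rpow_const (by linarith)).comp
      ((continuous_const.sub continuous_id).max continuous_const)).continuousOn
  have hsecond : IntervalIntegrable (fun s : ℝ => s ^ (1 - σ - 1) * (1 - s) ^ (α - 1 - 1))
      volume 0 1 :=
    hweight.mul_continuousOn ((continuous_rpow_const (by linarith)).comp
      (continuous_const.sub continuous_id)).continuousOn
  have hg_int : IntervalIntegrable g volume 0 1 :=
    (hfirst.add (hsecond.const_mul _)).const_mul _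
  have hg_integral : ∫ s in (0:ℝ)..1, g s =
      M * (α - 1) * t ^ (α - 2) / Gamma α * eulerBeta (1 - σ) (α - 1)
        + M * t ^ (α - σ) / Gamma α * eulerBeta (1 - σ) α := by
    rw [intervalIntegral.integral_const_mul, intervalIntegral.integral_add hfirst
      (hsecond.const_mul _), intervalIntegral.integral_const_mul,
      integral_rpow_mul_max_sub_rpow ht0 ht.2 (by linarith), show 1 - σ + α - 1 = α - σ by ring]
    have hbeta : ∫ s in (0:ℝ)..1, s ^ (1 - σ - 1) * (1 - s) ^ (α - 1 - 1) =
        eulerBeta (1 - σ) (α - 1) := rfl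
    rw [hbeta]
    ring
  have hg_bound : ∀ s ∈ Ioc (0:ℝ) 1, ‖greenG α t s * F s‖ ≤ g s := by
    intro s hs
    have hs' : s ∈ Icc (0:ℝ) 1 := Ioc_subset_Icc_self hs
    have hmaj : 0 ≤ max (t - s) 0 ^ (α - 1) + (α - 1) * t ^ (α - 2) * (1 - s) ^ (α - 2) :=
      add_nonneg (rpow_nonneg (le_max_right _ _) _) (mul_nonneg (mul_nonneg (by linarith)
        (rpow_nonneg ht.1 _)) (rpow_nonneg (sub_nonneg.2 hs.2) _))
    rw [norm_mul, norm_eq_abs, norm_eq_abs]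
    refine (mul_le_mul (abs_greenG_le hα.le ht hs') (abs_le_mul_rpow_neg hs.1 (hM s hs'))
      (abs_nonneg _) (div_nonneg hmaj hΓ.le)).trans_eq ?_
    rw [hg, show 1 - σ - 1 = -σ by ring, show α - 1 - 1 = α - 2 by ring]
    ring
  rw [← norm_eq_abs, ← hg_integral]
  exact intervalIntegral.norm_integral_le_of_norm_le zero_le_one (ae_of_all _ hg_bound) hg_int

theorem stmt7_general (σ α : ℝ) (hσ1 : σ < 1) (hα : 3 < α)
    (F : ℝ → ℝ)
    (M : ℝ) (hM : ∀ s ∈ Set.Icc (0:ℝ) 1, |s ^ σ * F s| ≤ M) :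
    ((∫ s in (0:ℝ)..1, greenG α 0 s * F s) = 0) ∧
    (∀ t ∈ Set.Icc (0:ℝ) 1,
      |∫ s in (0:ℝ)..1, greenG α t s * F s| ≤
        M * (α - 1) * t ^ (α - 2) / Real.Gamma α * eulerBeta (1 - σ) (α - 1)
          + M * t ^ (α - σ) / Real.Gamma α * eulerBeta (1 - σ) α) ∧
    ContinuousWithinAt (fun t : ℝ => ∫ s in (0:ℝ)..1, greenG α t s * F s) (Set.Icc 0 1) 0 := by
  have hα2 : 2 < α := by linarith
  have hH0 := integral_greenG_zero_mul hα2 F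
  refine ⟨hH0, fun t ht => abs_integral_greenG_mul_le hσ1 hα2 hM ht, ?_⟩
  have hbound_cont : ContinuousAt (fun t : ℝ =>
      M * (α - 1) * t ^ (α - 2) / Gamma α * eulerBeta (1 - σ) (α - 1)
        + M * t ^ (α - σ) / Gamma α * eulerBeta (1 - σ) α) 0 := by
    have h₁ := continuousAt_rpow_const 0 (α - 2) (Or.inr (by linarith))
    have h₂ := continuousAt_rpow_const 0 (α - σ) (Or.inr (by linarith))
    fun_prop
  have hbound_zero := hbound_cont.tendsto.mono_left (nhdsWithin_le_nhds (s := Icc (0:ℝ) 1))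
  rw [zero_rpow (by linarith), zero_rpow (by linarith)] at hbound_zero
  simp only [mul_zero, zero_div, zero_mul, add_zero] at hbound_zero
  rw [ContinuousWithinAt, hH0]
  exact squeeze_zero_norm' (eventually_nhdsWithin_of_forall fun t ht =>
    abs_integral_greenG_mul_le hσ1 hα2 hM ht) hbound_zero

theorem stmt7 (σ α : ℝ) (hσ0 : 0 < σ) (hσ1 : σ < 1) (hα : 3 < α) (hα4 : α ≤ 4)
    (F : ℝ → ℝ) (hF : ContinuousOn F (Set.Ioc 0 1))
    (hFext : ContinuousOn (fun s : ℝ => s ^ σ * F s) (Set.Icc 0 1))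
    (M : ℝ) (hM : ∀ s ∈ Set.Icc (0:ℝ) 1, |s ^ σ * F s| ≤ M) :
    ((∫ s in (0:ℝ)..1, greenG α 0 s * F s) = 0) ∧
    (∀ t ∈ Set.Icc (0:ℝ) 1,
      |∫ s in (0:ℝ)..1, greenG α t s * F s| ≤
        M * (α - 1) * t ^ (α - 2) / Real.Gamma α * eulerBeta (1 - σ) (α - 1)
          + M * t ^ (α - σ) / Real.Gamma α * eulerBeta (1 - σ) α) ∧
    ContinuousWithinAt (fun t : ℝ => ∫ s in (0:ℝ)..1, greenG α t s * F s) (Set.Icc 0 1) 0 :=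
  stmt7_general σ α hσ1 hα F M hM
end

section
/- Let 0 < σ < 1, 3 < α ≤ 4, and F : (0,1] → ℝ continuous such that s ↦ s^σ F(s) extends continuously to [0,1]. Then the function H(t) = ∫₀¹ G(t,s) F(s) ds is continuous on [0,1], where G is the Green's function for the fractional boundary value problem. -/
/-! For `α ≥ 2` the kernel `G` is jointly continuous, hence bounded on compact sets, and
`F(s) = s^(-σ) · (s^σ F(s))` is integrable on `(0, 1]` because `σ < 1`. Dominated convergence
with the bound `C |F|` then gives continuity of `t ↦ ∫ G(t, s) F(s) ds`. -/

open Real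

open MeasureTheory Set Filter Topology

theorem continuous_intervalIntegral_mul_of_continuous_uncurry {X : Type*} [TopologicalSpace X]
    [FirstCountableTopology X] [LocallyCompactSpace X] {K : X → ℝ → ℝ} {F : ℝ → ℝ} {a b : ℝ}
    (hK : Continuous (Function.uncurry K)) (hF : IntervalIntegrable F volume a b) :
    Continuous fun x => ∫ s in a..b, K x s * F s := by
  rw [continuous_iff_continuousAt]
  intro x₀
  obtain ⟨U, hU, hUx₀⟩ := exists_compact_mem_nhds x₀
  obtain ⟨C, hC⟩ := (hU.prod isCompact_uIcc).exists_bound_of_continuousOn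
    (hK.continuousOn (s := U ×ˢ uIcc a b))
  refine intervalIntegral.continuousAt_of_dominated_interval (bound := fun s => C * ‖F s‖)
    (Eventually.of_forall fun x => ?_) ?_ (hF.norm.const_mul C) ?_
  · exact (hK.comp (Continuous.prodMk_right x)).aestronglyMeasurable.mul
      hF.def'.aestronglyMeasurable
  · filter_upwards [hUx₀] with x hx
    refine ae_of_all _ fun s hs => ?_
    rw [norm_mul]
    exact mul_le_mul_of_nonneg_right (hC (x, s) ⟨hx, uIoc_subset_uIcc hs⟩) (norm_nonneg _)
  · exact ae_of_all _ fun s _ =>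
      ((hK.comp (continuous_id.prodMk continuous_const)).mul continuous_const).continuousAt

theorem intervalIntegrable_of_rpow_mul_continuousOn {σ : ℝ} (hσ : σ < 1) {F g : ℝ → ℝ}
    (hg : ContinuousOn g (Icc 0 1)) (hgF : ∀ s ∈ Ioc (0:ℝ) 1, g s = s ^ σ * F s) :
    IntervalIntegrable F volume 0 1 := by
  have hpow : IntegrableOn (fun s : ℝ => s ^ (-σ)) (Ioc 0 1) :=
    (intervalIntegral.intervalIntegrable_rpow' (a := 0) (b := 1) (by linarith)).1
  have hprod : IntegrableOn (fun s : ℝ => s ^ (-σ) * g s) (Ioc 0 1) :=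
    hpow.mul_continuousOn_of_subset hg measurableSet_Ioc isCompact_Icc Ioc_subset_Icc_self
  refine (intervalIntegrable_iff_integrableOn_Ioc_of_le zero_le_one).2 <|
    hprod.congr_fun (fun s hs => ?_) measurableSet_Ioc
  dsimp only
  rw [hgF s hs, ← mul_assoc, ← rpow_add hs.1, neg_add_cancel, rpow_zero, one_mul]

theorem greenG_eq_max {α : ℝ} (hα : 1 < α) (t s : ℝ) :
    greenG α t s = (max (t - s) 0 ^ (α - 1)
      + (1 - s) ^ (α - 2) * t ^ (α - 2) * ((s - t) + (α - 2) * (1 - t) * s)) / Gamma α := by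
  unfold greenG
  split_ifs with h
  · rw [max_eq_left (sub_nonneg.2 h)]
  · rw [max_eq_right (by linarith), zero_rpow (by linarith), zero_add]

theorem continuous_greenG {α : ℝ} (hα : 2 ≤ α) :
    Continuous fun p : ℝ × ℝ => greenG α p.1 p.2 := by
  simp only [greenG_eq_max (by linarith : 1 < α)]
  have hα1 : 0 ≤ α - 1 := by linarith
  have hα2 : 0 ≤ α - 2 := by linarith
  fun_prop (disch := first | exact Or.inr hα1 | exact Or.inr hα2)

theorem stmt8_general (σ α : ℝ) (hσ1 : σ < 1) (hα : 3 < α)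
    (F : ℝ → ℝ)
    (hFext : ∃ g : ℝ → ℝ, ContinuousOn g (Set.Icc 0 1) ∧
      ∀ s ∈ Set.Ioc (0:ℝ) 1, g s = s ^ σ * F s) :
    ContinuousOn (fun t : ℝ => ∫ s in (0:ℝ)..1, greenG α t s * F s) (Set.Icc 0 1) := by
  obtain ⟨g, hg, hgF⟩ := hFext
  have hFint : IntervalIntegrable F volume 0 1 :=
    intervalIntegrable_of_rpow_mul_continuousOn hσ1 hg hgF
  exact (continuous_intervalIntegral_mul_of_continuous_uncurry (K := greenG α)
    (continuous_greenG (by linarith)) hFint).continuousOn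

theorem stmt8 (σ α : ℝ) (hσ0 : 0 < σ) (hσ1 : σ < 1) (hα : 3 < α) (hα4 : α ≤ 4)
    (F : ℝ → ℝ) (hF : ContinuousOn F (Set.Ioc 0 1))
    (hFext : ∃ g : ℝ → ℝ, ContinuousOn g (Set.Icc 0 1) ∧
      ∀ s ∈ Set.Ioc (0:ℝ) 1, g s = s ^ σ * F s) :
    ContinuousOn (fun t : ℝ => ∫ s in (0:ℝ)..1, greenG α t s * F s) (Set.Icc 0 1) :=
  stmt8_general σ α hσ1 hα F hFext
end

section
/- Let 0 < σ < 1 and 3 < α ≤ 4. Then for every t ∈ [0,1], ∫₀¹ G(t,s) s^(−σ) ds = (1/Γ(α)) [t^(α−σ) B(1−σ,α) − t^(α−1)(B(1−σ,α−1) + (α−2)B(2−σ,α−1)) + (α−1) t^(α−2) B(2−σ,α−1)], where G is the Green's function and B the Beta function. -/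
open Real

/-!
On `s ≤ t` the Green's function carries the extra term `(t - s) ^ (α - 1)`, whose integral
against `s ^ (-σ)` over `[0, t]` becomes `t ^ (α - σ) B(1 - σ, α)` under `s = t u`.
The remaining part is `t ^ (α - 2) (1 - s) ^ (α - 2)` times the affine function
`(α - 1 - (α - 2) t) s - t` of `s`, so its integral is a combination of `B(2 - σ, α - 1)`
and `B(1 - σ, α - 1)`.
-/

open Set intervalIntegral
open MeasureTheory (volume)

variable {σ α β : ℝ}

lemma integral_one_sub_rpow_mul_rpow (x y : ℝ) :
    ∫ s in (0:ℝ)..1, (1 - s) ^ y * s ^ x = eulerBeta (x + 1) (y + 1) := by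
  simp only [eulerBeta, add_sub_cancel_right]
  exact integral_congr fun s _ => mul_comm _ _

lemma integral_sub_rpow_mul_rpow_eq_eulerBeta {t : ℝ} (ht : 0 ≤ t) (hσα : σ ≠ α) :
    ∫ s in (0:ℝ)..t, (t - s) ^ (α - 1) * s ^ (-σ)
      = t ^ (α - σ) * eulerBeta (1 - σ) α := by
  rcases ht.eq_or_lt with rfl | ht
  · simp [zero_rpow (sub_ne_zero.2 hσα.symm)]
  have hscale : ∀ u ∈ uIcc (0:ℝ) 1, t * ((t - t * u) ^ (α - 1) * (t * u) ^ (-σ))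
      = t ^ (α - σ) * (u ^ (1 - σ - 1) * (1 - u) ^ (α - 1)) := by
    intro u hu
    rw [uIcc_of_le zero_le_one] at hu
    rw [show t - t * u = t * (1 - u) by ring, mul_rpow ht.le (by linarith [hu.2]),
      mul_rpow ht.le hu.1, show α - σ = α - 1 + -σ + 1 by ring, rpow_add ht, rpow_add ht,
      rpow_one, show 1 - σ - 1 = -σ by ring]
    ring
  calc ∫ s in (0:ℝ)..t, (t - s) ^ (α - 1) * s ^ (-σ)
      = t • ∫ u in (0:ℝ)..1, (t - t * u) ^ (α - 1) * (t * u) ^ (-σ) := by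
        rw [smul_integral_comp_mul_left (fun s => (t - s) ^ (α - 1) * s ^ (-σ)), mul_zero,
          mul_one]
    _ = t ^ (α - σ) * eulerBeta (1 - σ) α := by
        rw [smul_eq_mul, ← integral_const_mul, integral_congr hscale, integral_const_mul]
        rfl

lemma integral_one_sub_rpow_mul_affine_mul_rpow (hσ : σ < 1) (hβ : 0 ≤ β) (a b : ℝ) :
    ∫ s in (0:ℝ)..1, (1 - s) ^ β * (a * s - b) * s ^ (-σ)
      = a * eulerBeta (2 - σ) (β + 1) - b * eulerBeta (1 - σ) (β + 1) := by
  have hcont : ContinuousOn (fun s : ℝ => (1 - s) ^ β) (uIcc 0 1) := by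
    fun_prop (disch := exact hβ)
  have hsplit : ∀ s ∈ uIcc (0:ℝ) 1, (1 - s) ^ β * (a * s - b) * s ^ (-σ)
      = a * ((1 - s) ^ β * s ^ (1 - σ)) - b * ((1 - s) ^ β * s ^ (-σ)) := by
    intro s hs
    rw [uIcc_of_le zero_le_one] at hs
    rw [show 1 - σ = -σ + 1 by ring, rpow_add_one' hs.1 (by linarith)]
    ring
  rw [integral_congr hsplit, integral_sub, integral_const_mul, integral_const_mul,
    integral_one_sub_rpow_mul_rpow, integral_one_sub_rpow_mul_rpow]
  · ring_nf
  · exact ((intervalIntegrable_rpow' (by linarith)).continuousOn_mul hcont).const_mul a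
  · exact ((intervalIntegrable_rpow' (by linarith)).continuousOn_mul hcont).const_mul b

lemma greenG_eq_indicator_add (t s : ℝ) :
    greenG α t s = ({x | x ≤ t}.indicator (fun s => (t - s) ^ (α - 1)) s
      + t ^ (α - 2) * ((1 - s) ^ (α - 2) * ((1 + (α - 2) * (1 - t)) * s - t))) / Gamma α := by
  unfold greenG
  split_ifs with h
  · rw [indicator_of_mem (show s ∈ {x | x ≤ t} from h)]
    ring
  · rw [indicator_of_notMem (show s ∉ {x | x ≤ t} from h)]
    ring

theorem stmt9_general (σ α : ℝ) (hσ1 : σ < 1) (hα : 3 < α)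
    (t : ℝ) (ht : t ∈ Set.Icc (0:ℝ) 1) :
    (∫ s in (0:ℝ)..1, greenG α t s * s ^ (-σ)) =
      (1 / Real.Gamma α) *
        (t ^ (α - σ) * eulerBeta (1 - σ) α
          - t ^ (α - 1) * (eulerBeta (1 - σ) (α - 1) + (α - 2) * eulerBeta (2 - σ) (α - 1))
          + (α - 1) * t ^ (α - 2) * eulerBeta (2 - σ) (α - 1)) := by
  set a := 1 + (α - 2) * (1 - t)
  have hF : IntervalIntegrable (fun s => (t - s) ^ (α - 1) * s ^ (-σ)) volume 0 1 :=
    (intervalIntegrable_rpow' (by linarith)).continuousOn_mul (by fun_prop (disch := linarith))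
  have hP : IntervalIntegrable (fun s => (1 - s) ^ (α - 2) * (a * s - t) * s ^ (-σ)) volume 0 1 :=
    (intervalIntegrable_rpow' (by linarith)).continuousOn_mul (by fun_prop (disch := linarith))
  have hsplit : ∀ s, greenG α t s * s ^ (-σ) =
      ({x | x ≤ t}.indicator (fun s => (t - s) ^ (α - 1) * s ^ (-σ)) s
        + t ^ (α - 2) * ((1 - s) ^ (α - 2) * (a * s - t) * s ^ (-σ))) / Gamma α := by
    intro s
    rw [greenG_eq_indicator_add, indicator_mul_left]
    ring
  have hInd : IntervalIntegrable ({x | x ≤ t}.indicator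
      fun s => (t - s) ^ (α - 1) * s ^ (-σ)) volume 0 1 :=
    intervalIntegrable_iff.2 ((intervalIntegrable_iff.1 hF).indicator measurableSet_Iic)
  have hpow : t ^ (α - 1) = t ^ (α - 2) * t := by
    rw [← rpow_add_one' ht.1 (by linarith)]
    ring_nf
  simp_rw [hsplit]
  rw [integral_div, integral_add hInd (hP.const_mul _), integral_indicator ht, integral_const_mul,
    integral_sub_rpow_mul_rpow_eq_eulerBeta ht.1 (by linarith),
    integral_one_sub_rpow_mul_affine_mul_rpow hσ1 (by linarith), show α - 2 + 1 = α - 1 by ring,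
    hpow]
  ring

theorem stmt9 (σ α : ℝ) (hσ0 : 0 < σ) (hσ1 : σ < 1) (hα : 3 < α) (hα4 : α ≤ 4)
    (t : ℝ) (ht : t ∈ Set.Icc (0:ℝ) 1) :
    (∫ s in (0:ℝ)..1, greenG α t s * s ^ (-σ)) =
      (1 / Real.Gamma α) *
        (t ^ (α - σ) * eulerBeta (1 - σ) α
          - t ^ (α - 1) * (eulerBeta (1 - σ) (α - 1) + (α - 2) * eulerBeta (2 - σ) (α - 1))
          + (α - 1) * t ^ (α - 2) * eulerBeta (2 - σ) (α - 1)) :=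
  stmt9_general σ α hσ1 hα t ht
end

section
/- Let (X,d) be a complete metric space and T : X → X a mapping such that there exist τ > 0 and φ : (0,∞) → ℝ satisfying: φ is strictly increasing; for every sequence (tₙ) in (0,∞), tₙ → 0 iff φ(tₙ) → −∞; there exists k ∈ (0,1) with t^k φ(t) → 0 as t → 0⁺; and for all x, y ∈ X with d(Tx,Ty) > 0, τ + φ(d(Tx,Ty)) ≤ φ(d(x,y)). Then T has a unique fixed point. -/
open Filter

/-!
Along an orbit with all steps `dₙ = d(Tⁿx, Tⁿ⁺¹x)` positive, the contraction condition gives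
`φ(dₙ) ≤ φ(d₀) - nτ`, so `φ(dₙ) → -∞` and hence `dₙ → 0`. Multiplying by `dₙ^k`,
`n τ dₙ^k ≤ dₙ^k (φ(d₀) - φ(dₙ)) → 0`, so eventually `dₙ ≤ n^(-1/k)` with `1/k > 1`: the steps are
summable, the orbit is Cauchy, and its limit is fixed because `T` is `1`-Lipschitz. Two distinct
fixed points `x, y` would give `τ + φ(d(x,y)) ≤ φ(d(x,y))`.
-/

open Topology Function

theorem summable_of_eventually_rpow_mul_natCast_le_one {d : ℕ → ℝ} {k : ℝ} (hd : ∀ n, 0 ≤ d n)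
    (hk0 : 0 < k) (hk1 : k < 1) (h : ∀ᶠ n : ℕ in atTop, d n ^ k * n ≤ 1) : Summable d := by
  have hp : Summable fun n : ℕ => (n : ℝ) ^ (-(1 / k)) := by
    rw [Real.summable_nat_rpow]
    linarith [one_lt_one_div hk0 hk1]
  refine hp.of_norm_bounded_eventually_nat ?_
  filter_upwards [h, eventually_gt_atTop 0] with n hn hn0
  have hn0 : (0 : ℝ) < n := by exact_mod_cast hn0
  rwa [Real.norm_of_nonneg (hd n), ← Real.rpow_le_rpow_iff (hd n) (by positivity) hk0,
    ← Real.rpow_mul hn0.le, neg_mul, one_div_mul_cancel hk0.ne', Real.rpow_neg_one, ← one_div,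
    le_div_iff₀ hn0]

theorem summable_of_le_sub_mul_of_rpow_mul_tendsto {φ : ℝ → ℝ} {d : ℕ → ℝ}
    {c τ k : ℝ} (hτ : 0 < τ) (hk0 : 0 < k) (hk1 : k < 1)
    (hφ : Tendsto (fun t : ℝ => t ^ k * φ t) (𝓝[>] 0) (𝓝 0))
    (hd : ∀ n, 0 < d n) (hd0 : Tendsto d atTop (𝓝 0)) (hbound : ∀ n : ℕ, φ (d n) ≤ c - n * τ) :
    Summable d := by
  have hdk : Tendsto (fun n => d n ^ k) atTop (𝓝 0) := by
    simpa [Real.zero_rpow hk0.ne'] using hd0.rpow_const (p := k) (Or.inr hk0.le)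
  have hdkφ : Tendsto (fun n => d n ^ k * φ (d n)) atTop (𝓝 0) :=
    hφ.comp (tendsto_nhdsWithin_of_tendsto_nhds_of_eventually_within d hd0 (.of_forall hd))
  have hgap : Tendsto (fun n => d n ^ k * (c - φ (d n))) atTop (𝓝 0) := by
    simpa [mul_sub] using (hdk.mul_const c).sub hdkφ
  refine summable_of_eventually_rpow_mul_natCast_le_one (fun n => (hd n).le) hk0 hk1 ?_
  filter_upwards [hgap.eventually_lt_const hτ] with n hn
  have : d n ^ k * (n * τ) ≤ d n ^ k * (c - φ (d n)) :=
    mul_le_mul_of_nonneg_left (by linarith [hbound n]) (Real.rpow_nonneg (hd n).le k)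
  nlinarith

def IsFContraction {X : Type*} [MetricSpace X] (T : X → X) (τ : ℝ) (φ : ℝ → ℝ) : Prop :=
  ∀ x y : X, 0 < dist (T x) (T y) → τ + φ (dist (T x) (T y)) ≤ φ (dist x y)

namespace IsFContraction

variable {X : Type*} [MetricSpace X] {T : X → X} {τ : ℝ} {φ : ℝ → ℝ}

theorem lipschitzWith_one (hT : IsFContraction T τ φ) (hτ : 0 < τ)
    (hφ : StrictMonoOn φ (Set.Ioi 0)) : LipschitzWith 1 T := by
  refine LipschitzWith.of_dist_le_mul fun x y => ?_
  rw [NNReal.coe_one, one_mul]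
  rcases (dist_nonneg (x := T x) (y := T y)).eq_or_lt with h | h
  · exact h ▸ dist_nonneg
  have hxy : 0 < dist x y := dist_pos.2 fun hxy => h.ne' (by rw [hxy, dist_self])
  exact ((hφ.lt_iff_lt h hxy).1 (by linarith [hT x y h])).le

theorem eq_of_isFixedPt (hT : IsFContraction T τ φ) (hτ : 0 < τ) {x y : X}
    (hx : IsFixedPt T x) (hy : IsFixedPt T y) : x = y := by
  by_contra hne
  have h := hT x y (by rw [hx.eq, hy.eq]; exact dist_pos.2 hne)
  rw [hx.eq, hy.eq] at h
  linarith

theorem apply_dist_iterate_le (hT : IsFContraction T τ φ) (x : X)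
    (hpos : ∀ n, 0 < dist (T^[n] x) (T^[n + 1] x)) (n : ℕ) :
    φ (dist (T^[n] x) (T^[n + 1] x)) ≤ φ (dist x (T x)) - n * τ := by
  induction n with
  | zero => simp
  | succ n ih =>
    have h := hT (T^[n] x) (T^[n + 1] x)
    simp only [← iterate_succ_apply' T] at h
    push_cast
    linarith [h (hpos (n + 1))]

theorem exists_isFixedPt [CompleteSpace X] [Nonempty X] (hT : IsFContraction T τ φ) (hτ : 0 < τ)
    (hφ : StrictMonoOn φ (Set.Ioi 0))
    (hφ_atBot : ∀ t : ℕ → ℝ, (∀ n, 0 < t n) →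
      Tendsto (fun n => φ (t n)) atTop atBot → Tendsto t atTop (𝓝 0))
    {k : ℝ} (hk0 : 0 < k) (hk1 : k < 1)
    (hφk : Tendsto (fun t : ℝ => t ^ k * φ t) (𝓝[>] 0) (𝓝 0)) :
    ∃ x, IsFixedPt T x := by
  obtain ⟨x⟩ := ‹Nonempty X›
  by_cases hpos : ∀ n, 0 < dist (T^[n] x) (T^[n + 1] x)
  · have hbound := hT.apply_dist_iterate_le x hpos
    have hd0 := hφ_atBot _ hpos <| tendsto_atBot_mono hbound <|
      tendsto_atBot_add_const_left _ _ <|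
        tendsto_neg_atTop_atBot.comp (tendsto_natCast_atTop_atTop.atTop_mul_const hτ)
    obtain ⟨y, hy⟩ := cauchySeq_tendsto_of_complete <| cauchySeq_of_summable_dist <|
      summable_of_le_sub_mul_of_rpow_mul_tendsto hτ hk0 hk1 hφk hpos hd0 hbound
    exact ⟨y, isFixedPt_of_tendsto_iterate hy (hT.lipschitzWith_one hτ hφ).continuous.continuousAt⟩
  · push Not at hpos
    obtain ⟨n, hn⟩ := hpos
    refine ⟨T^[n] x, ?_⟩
    rw [IsFixedPt, ← iterate_succ_apply' T]
    exact (dist_le_zero.1 hn).symm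

end IsFContraction

theorem stmt16 {X : Type*} [MetricSpace X] [CompleteSpace X] [Nonempty X]
    (T : X → X) (τ : ℝ) (hτ : 0 < τ) (φ : ℝ → ℝ)
    (hmono : StrictMonoOn φ (Set.Ioi 0))
    (hseq : ∀ t : ℕ → ℝ, (∀ n, 0 < t n) →
      (Tendsto t atTop (nhds 0) ↔ Tendsto (fun n => φ (t n)) atTop atBot))
    (hk : ∃ k ∈ Set.Ioo (0:ℝ) 1,
      Tendsto (fun t : ℝ => t ^ k * φ t) (nhdsWithin 0 (Set.Ioi 0)) (nhds 0))
    (hcontr : ∀ x y : X, 0 < dist (T x) (T y) →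
      τ + φ (dist (T x) (T y)) ≤ φ (dist x y)) :
    ∃! x : X, T x = x := by
  have hT : IsFContraction T τ φ := hcontr
  obtain ⟨k, ⟨hk0, hk1⟩, hφk⟩ := hk
  obtain ⟨x, hx⟩ := hT.exists_isFixedPt hτ hmono (fun t ht => (hseq t ht).2) hk0 hk1 hφk
  exact ⟨x, hx, fun y hy => hT.eq_of_isFixedPt hτ hy hx⟩
end

section
/- Let (X,d) be a complete metric space, τ > 0, and T : X → X a mapping such that d(Tx,Ty) ≤ d(x,y)/(1 + τ√(d(x,y)))² whenever d(Tx,Ty) > 0. Then T has a unique fixed point in X. -/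
/-! With `F t = -1/√t`, the hypothesis is Wardowski's F-contraction condition
`τ + F (d(Tx, Ty)) ≤ F (d(x, y))`. Along a Picard orbit without fixed points, the numbers
`1/√(d(xₙ, xₙ₊₁))` therefore grow at least like `nτ`, so `d(xₙ, xₙ₊₁) = O(1/n²)` is summable and
the orbit is Cauchy. Its limit is fixed because `T` is nonexpansive, and it is unique because
`T` strictly decreases positive distances. -/

open Function

lemma div_one_add_mul_sqrt_sq_lt_self {d τ : ℝ} (hd : 0 < d) (hτ : 0 < τ) :
    d / (1 + τ * √d) ^ 2 < d :=
  div_lt_self hd <|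
    one_lt_pow₀ (lt_add_of_pos_right 1 (mul_pos hτ (Real.sqrt_pos.2 hd))) two_ne_zero

lemma inv_sqrt_add_le_inv_sqrt {d d' τ : ℝ} (hd : 0 < d) (hd' : 0 < d') (hτ : 0 ≤ τ)
    (h : d' ≤ d / (1 + τ * √d) ^ 2) : (√d)⁻¹ + τ ≤ (√d')⁻¹ := by
  have hsqrt : 0 < √d := Real.sqrt_pos.2 hd
  have hden : 0 < 1 + τ * √d := by positivity
  have hsqrt_le : √d' ≤ √d / (1 + τ * √d) := by
    simpa only [Real.sqrt_div' _ (sq_nonneg _), Real.sqrt_sq hden.le] using Real.sqrt_le_sqrt h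
  calc (√d)⁻¹ + τ = (√d / (1 + τ * √d))⁻¹ := by field_simp
    _ ≤ (√d')⁻¹ := inv_anti₀ (Real.sqrt_pos.2 hd') hsqrt_le

lemma summable_of_inv_sqrt_add_le {u : ℕ → ℝ} {τ : ℝ} (hu : ∀ n, 0 < u n) (hτ : 0 < τ)
    (h : ∀ n, (√(u n))⁻¹ + τ ≤ (√(u (n + 1)))⁻¹) : Summable u := by
  have hlinear : ∀ n : ℕ, n * τ ≤ (√(u n))⁻¹ := by
    intro n
    induction n with
    | zero => simp only [Nat.cast_zero, zero_mul, inv_nonneg, Real.sqrt_nonneg]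
    | succ n ih => push_cast; linarith [h n]
  have hbound : ∀ n : ℕ, u (n + 1) ≤ (τ ^ 2)⁻¹ * (((n + 1 : ℕ) : ℝ) ^ 2)⁻¹ := by
    intro n
    have hpos : 0 < ((n + 1 : ℕ) : ℝ) * τ := by positivity
    calc u (n + 1) = ((√(u (n + 1)))⁻¹ ^ 2)⁻¹ := by
          rw [inv_pow, Real.sq_sqrt (hu _).le, inv_inv]
      _ ≤ ((((n + 1 : ℕ) : ℝ) * τ) ^ 2)⁻¹ := by gcongr; exact hlinear _
      _ = (τ ^ 2)⁻¹ * (((n + 1 : ℕ) : ℝ) ^ 2)⁻¹ := by rw [mul_pow, mul_inv, mul_comm]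
  have hsum : Summable fun n : ℕ => (((n + 1 : ℕ) : ℝ) ^ 2)⁻¹ :=
    (summable_nat_add_iff 1).2 (Real.summable_nat_pow_inv.2 one_lt_two)
  exact (summable_nat_add_iff 1).1 <|
    Summable.of_nonneg_of_le (fun n => (hu _).le) hbound (hsum.mul_left _)

def IsInvSqrtFContraction {X : Type*} [MetricSpace X] (T : X → X) (τ : ℝ) : Prop :=
  ∀ x y : X, 0 < dist (T x) (T y) → dist (T x) (T y) ≤ dist x y / (1 + τ * √(dist x y)) ^ 2

namespace IsInvSqrtFContraction

variable {X : Type*} [MetricSpace X] {T : X → X} {τ : ℝ}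

lemma dist_lt (hT : IsInvSqrtFContraction T τ) (hτ : 0 < τ) {x y : X}
    (h : 0 < dist (T x) (T y)) : dist (T x) (T y) < dist x y := by
  have hxy : 0 < dist x y := dist_pos.2 fun hxy => h.ne' (by rw [hxy, dist_self])
  exact (hT x y h).trans_lt (div_one_add_mul_sqrt_sq_lt_self hxy hτ)

lemma continuous (hT : IsInvSqrtFContraction T τ) (hτ : 0 < τ) : Continuous T := by
  refine (LipschitzWith.of_dist_le_mul (K := 1) fun x y => ?_).continuous
  rw [NNReal.coe_one, one_mul]
  rcases (dist_nonneg (x := T x) (y := T y)).eq_or_lt with h | h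
  · exact h ▸ dist_nonneg
  · exact (hT.dist_lt hτ h).le

lemma inv_sqrt_dist_add_le (hT : IsInvSqrtFContraction T τ) (hτ : 0 < τ) {x y : X}
    (h : 0 < dist (T x) (T y)) : (√(dist x y))⁻¹ + τ ≤ (√(dist (T x) (T y)))⁻¹ :=
  inv_sqrt_add_le_inv_sqrt (h.trans (hT.dist_lt hτ h)) h hτ.le (hT x y h)

lemma exists_isFixedPt [CompleteSpace X] [Nonempty X] (hT : IsInvSqrtFContraction T τ)
    (hτ : 0 < τ) : ∃ x, IsFixedPt T x := by
  obtain ⟨x₀⟩ := ‹Nonempty X›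
  by_cases hfix : ∃ n, IsFixedPt T (T^[n] x₀)
  · obtain ⟨n, hn⟩ := hfix
    exact ⟨_, hn⟩
  push Not at hfix
  have hpos : ∀ n, 0 < dist (T^[n] x₀) (T^[n + 1] x₀) := fun n => by
    rw [iterate_succ_apply', dist_pos]
    exact fun h => hfix n h.symm
  have hsum : Summable fun n => dist (T^[n] x₀) (T^[n + 1] x₀) := by
    refine summable_of_inv_sqrt_add_le hpos hτ fun n => ?_
    have hnext := hpos (n + 1)
    simp only [iterate_succ_apply'] at hnext ⊢
    exact hT.inv_sqrt_dist_add_le hτ hnext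
  obtain ⟨x, hx⟩ := cauchySeq_tendsto_of_complete (cauchySeq_of_summable_dist hsum)
  exact ⟨x, isFixedPt_of_tendsto_iterate hx (hT.continuous hτ).continuousAt⟩

lemma eq_of_isFixedPt (hT : IsInvSqrtFContraction T τ) (hτ : 0 < τ) {x y : X}
    (hx : IsFixedPt T x) (hy : IsFixedPt T y) : x = y := by
  by_contra hxy
  have hlt := hT.dist_lt hτ (x := x) (y := y) (by rw [hx.eq, hy.eq]; exact dist_pos.2 hxy)
  rw [hx.eq, hy.eq] at hlt
  exact lt_irrefl _ hlt

end IsInvSqrtFContraction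

theorem stmt17 {X : Type*} [MetricSpace X] [CompleteSpace X] [Nonempty X]
    (T : X → X) (τ : ℝ) (hτ : 0 < τ)
    (hcontr : ∀ x y : X, 0 < dist (T x) (T y) →
      dist (T x) (T y) ≤ dist x y / (1 + τ * Real.sqrt (dist x y)) ^ 2) :
    ∃! x : X, T x = x := by
  have hT : IsInvSqrtFContraction T τ := hcontr
  obtain ⟨x, hx⟩ := hT.exists_isFixedPt hτ
  exact ⟨x, hx, fun y hy => hT.eq_of_isFixedPt hτ hy hx⟩
end
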